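/- arXiv:1506.07625 — 5 statements merged into one kernel-verified Lean document; each statement's English description precedes it below -/
import Mathlib

section
/- Let ρ be a symmetric probability measure on ℝ (i.e. ρ(−A) = ρ(A) for all Borel sets A). If ρ is l-weakly-diophantine, then liminf_{|b|→∞} |b|^{2l} |1 − |ρ̂(ib)|| > 0 (i.e. ρ is 2l-diophantine in the sense of Breuillard). -/
/-!
For symmetric `ρ` the transform `ρ̂(ib) = φ(b) := ∫ cos (b y) dρ(y)` is real with `|φ| ≤ 1`, so
`1 - |φ(b)| = min (1 - φ(b)) (1 + φ(b))`. The first term is bounded below by the weak diophantine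
hypothesis at `b`. For the second, `1 - cos 2x = 2 (1 - cos x) (1 + cos x) ≤ 4 (1 + cos x)`
integrates to `1 - φ(2b) ≤ 4 (1 + φ(b))`, and the hypothesis at `2b` bounds the left side.
Hence `|b| ^ l (1 - |φ(b)|)` stays bounded below, and a fortiori so does `|b| ^ (2l) (1 - |φ(b)|)`.
-/

open MeasureTheory

lemma norm_one_sub_ofReal (x : ℝ) : ‖(1 : ℂ) - x‖ = |1 - x| := by
  rw [← Complex.ofReal_one, ← Complex.ofReal_sub, Complex.norm_real, Real.norm_eq_abs]

lemma one_sub_cos_two_mul_le (x : ℝ) : 1 - Real.cos (2 * x) ≤ 4 * (1 + Real.cos x) := by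
  nlinarith [Real.cos_two_mul x, Real.neg_one_le_cos x, Real.cos_le_one x]

section CosineTransform

variable {ρ : Measure ℝ}

open Complex in
lemma integral_cexp_neg_mul_I_eq_integral_cos [IsFiniteMeasure ρ]
    [ρ.IsNegInvariant] (b : ℝ) :
    ∫ y, cexp (-(I * b) * y) ∂ρ = ↑(∫ y, Real.cos (b * y) ∂ρ) := by
  set f : ℝ → ℂ := fun y => cexp (-(I * b) * y)
  have hf : Integrable f ρ :=
    .of_bound (by fun_prop) 1 (ae_of_all _ fun y => by simp [f, norm_exp])
  have hcos (y : ℝ) : f (-y) + f y = 2 * ↑(Real.cos (b * y)) := by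
    rw [ofReal_cos, two_cos]
    simp only [f, ofReal_neg, ofReal_mul]
    ring_nf
  calc ∫ y, f y ∂ρ = 2⁻¹ * (∫ y, f (-y) ∂ρ + ∫ y, f y ∂ρ) := by
        rw [integral_neg_eq_self]; ring
    _ = ∫ y, ↑(Real.cos (b * y)) ∂ρ := by
        rw [← integral_add hf.comp_neg hf, ← integral_const_mul]
        simp only [hcos, inv_mul_cancel_left₀ (two_ne_zero' ℂ)]
    _ = ↑(∫ y, Real.cos (b * y) ∂ρ) := integral_ofReal

lemma integrable_cos_mul [IsFiniteMeasure ρ] (b : ℝ) :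
    Integrable (fun y => Real.cos (b * y)) ρ :=
  .of_bound (by fun_prop) 1 (ae_of_all _ fun y => by simp [Real.abs_cos_le_one])

lemma abs_integral_cos_mul_le_one [IsProbabilityMeasure ρ] (b : ℝ) :
    |∫ y, Real.cos (b * y) ∂ρ| ≤ 1 := by
  simpa using norm_integral_le_of_norm_le_const (μ := ρ) (C := 1)
    (ae_of_all _ fun y => (Real.norm_eq_abs _).trans_le (Real.abs_cos_le_one (b * y)))

lemma one_sub_integral_cos_two_mul_le [IsProbabilityMeasure ρ] (b : ℝ) :
    1 - ∫ y, Real.cos (2 * b * y) ∂ρ ≤ 4 * (1 + ∫ y, Real.cos (b * y) ∂ρ) := by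
  have hmono : ∫ y, (1 - Real.cos (2 * b * y)) ∂ρ ≤ ∫ y, 4 * (1 + Real.cos (b * y)) ∂ρ :=
    integral_mono ((integrable_const 1).sub (integrable_cos_mul _))
      (((integrable_const 1).add (integrable_cos_mul b)).const_mul 4)
      fun y => by simpa only [mul_assoc] using one_sub_cos_two_mul_le (b * y)
  rwa [integral_sub (integrable_const 1) (integrable_cos_mul _), integral_const_mul,
    integral_add (integrable_const 1) (integrable_cos_mul b), integral_const, probReal_univ,
    one_smul] at hmono

end CosineTransform

lemma div_le_rpow_mul_one_sub_abs {l c b x y : ℝ} (hl : 0 ≤ l) (hc : 0 ≤ c)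
    (hdouble : 1 - y ≤ 4 * (1 + x)) (hb : c ≤ |b| ^ l * (1 - x))
    (h2b : c ≤ |2 * b| ^ l * (1 - y)) :
    c / (4 * 2 ^ l) ≤ |b| ^ l * (1 - |x|) := by
  have hs : 1 ≤ (2 : ℝ) ^ l := Real.one_le_rpow one_le_two hl
  have ht : 0 ≤ |b| ^ l := by positivity
  rw [abs_mul, abs_two, Real.mul_rpow zero_le_two (abs_nonneg b)] at h2b
  rw [div_le_iff₀ (by positivity)]
  rcases abs_cases x with ⟨hx, -⟩ | ⟨hx, -⟩ <;> rw [hx]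
  · nlinarith
  · nlinarith [mul_le_mul_of_nonneg_left hdouble (mul_nonneg (by positivity : (0:ℝ) ≤ 2 ^ l) ht)]

theorem stmt11 (ρ : Measure ℝ) [IsProbabilityMeasure ρ]
    (hsym : ρ.map (fun y => -y) = ρ)
    (l : ℝ) (hl : 0 ≤ l)
    (hwd : ∃ c > (0:ℝ), ∃ B : ℝ, ∀ b : ℝ, B ≤ |b| →
      c ≤ |b| ^ l * ‖1 - ∫ y, Complex.exp (-(Complex.I * b) * (y : ℂ)) ∂ρ‖) :
    ∃ c > (0:ℝ), ∃ B : ℝ, ∀ b : ℝ, B ≤ |b| →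
      c ≤ |b| ^ (2 * l) * |1 - ‖∫ y, Complex.exp (-(Complex.I * b) * (y : ℂ)) ∂ρ‖| := by
  have : ρ.IsNegInvariant := ⟨hsym⟩
  obtain ⟨c, hc, B, hB⟩ := hwd
  simp only [integral_cexp_neg_mul_I_eq_integral_cos, norm_one_sub_ofReal, Complex.norm_real,
    Real.norm_eq_abs] at hB ⊢
  refine ⟨c / (4 * 2 ^ l), by positivity, max B 1, fun b hb => ?_⟩
  have hb1 : 1 ≤ |b| := le_of_max_le_right hb
  have hbB : B ≤ |b| := le_of_max_le_left hb
  have h2bB : B ≤ |2 * b| := by rw [abs_mul, abs_two]; linarith [abs_nonneg b]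
  have hφ_le_one (a : ℝ) : ∫ y, Real.cos (a * y) ∂ρ ≤ 1 := le_of_abs_le (abs_integral_cos_mul_le_one a)
  have h1 := hB b hbB
  have h2 := hB (2 * b) h2bB
  rw [abs_of_nonneg (sub_nonneg.mpr (hφ_le_one b))] at h1
  rw [abs_of_nonneg (sub_nonneg.mpr (hφ_le_one (2 * b)))] at h2
  calc c / (4 * 2 ^ l)
      ≤ |b| ^ l * (1 - |∫ y, Real.cos (b * y) ∂ρ|) :=
        div_le_rpow_mul_one_sub_abs hl hc.le (one_sub_integral_cos_two_mul_le b) h1 h2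
    _ ≤ _ :=
        mul_le_mul (Real.rpow_le_rpow_of_exponent_le hb1 (by linarith)) (le_abs_self _)
          (sub_nonneg.mpr (abs_integral_cos_mul_le_one b)) (by positivity)
end

section
/- Let ρ be a probability measure on ℝ with an exponential moment of order η > 0 and positive drift λ = ∫ y dρ(y) > 0. Then there exists s₀ > 0 such that for every z ∈ ℂ with 0 < Re(z) ≤ s₀, |ρ̂(z)| < 1; in particular ρ̂(z) ≠ 1 on this half-strip. -/
open MeasureTheory Real Filter Metric

theorem stmt12 (ρ : Measure ℝ) [IsProbabilityMeasure ρ] (η : ℝ) (hη : 0 < η)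
    (hmom : Integrable (fun y => Real.exp (η * |y|)) ρ)
    (hdrift : 0 < ∫ y, y ∂ρ) :
    ∃ s₀ > (0:ℝ), s₀ < η ∧ ∀ z : ℂ, 0 < z.re → z.re ≤ s₀ →
      ‖∫ y, Complex.exp (-z * (y : ℂ)) ∂ρ‖ < 1 := by
  set lam := ∫ y, y ∂ρ with hlam
  set f : ℝ → ℝ := fun s => ∫ y, Real.exp (-(s * y)) ∂ρ with hf
  -- integrability of y
  have hyint : Integrable (fun y : ℝ => y) ρ := by
    refine (hmom.const_mul (1/η)).mono' measurable_id.aestronglyMeasurable ?_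
    filter_upwards with y
    have h1 := Real.add_one_le_exp (η * |y|)
    have h2 : (0:ℝ) ≤ η * |y| := mul_nonneg hη.le (abs_nonneg y)
    rw [Real.norm_eq_abs]
    rw [div_mul_eq_mul_div, one_mul, le_div_iff₀ hη]
    nlinarith
  -- the dominated derivative
  have hbound_int : Integrable (fun y => (2/η) * Real.exp (η * |y|)) ρ := hmom.const_mul _
  have key := hasDerivAt_integral_of_dominated_loc_of_deriv_le (μ := ρ)
      (F := fun s (y : ℝ) => Real.exp (-(s * y)))
      (F' := fun s (y : ℝ) => -y * Real.exp (-(s * y))) (x₀ := 0) (s := ball 0 (η/2))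
      (bound := fun y => (2/η) * Real.exp (η * |y|)) (ball_mem_nhds 0 (half_pos hη))
      (by
        filter_upwards with s
        exact (Real.continuous_exp.comp (continuous_const.mul continuous_id).neg).aestronglyMeasurable)
      (by simpa using (integrable_const (1:ℝ) : Integrable (fun _ : ℝ => (1:ℝ)) ρ))
      (by
        exact ((continuous_id.neg.mul
          (Real.continuous_exp.comp (continuous_const.mul continuous_id).neg)).aestronglyMeasurable))
      (by
        filter_upwards with y s hs
        have hs' : |s| < η/2 := by simpa [Real.dist_eq] using hs
        have h1 : Real.exp (-(s*y)) ≤ Real.exp ((η/2) * |y|) := by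
          apply Real.exp_le_exp.2
          calc -(s*y) ≤ |s*y| := neg_le_abs _
            _ = |s| * |y| := abs_mul _ _
            _ ≤ (η/2) * |y| := mul_le_mul_of_nonneg_right hs'.le (abs_nonneg y)
        have h2 : |y| ≤ (2/η) * Real.exp ((η/2) * |y|) := by
          have h := Real.add_one_le_exp ((η/2) * |y|)
          rw [div_mul_eq_mul_div, le_div_iff₀ hη]
          nlinarith [h]
        have h3 : Real.exp ((η/2)*|y|) * Real.exp ((η/2)*|y|) = Real.exp (η*|y|) := by
          rw [← Real.exp_add]; ring_nf
        calc ‖-y * Real.exp (-(s*y))‖ = |y| * Real.exp (-(s*y)) := by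
              rw [norm_mul, Real.norm_eq_abs, Real.norm_eq_abs, abs_neg,
                abs_of_pos (Real.exp_pos _)]
          _ ≤ ((2/η) * Real.exp ((η/2)*|y|)) * Real.exp ((η/2)*|y|) := by
              apply mul_le_mul h2 h1 (Real.exp_pos _).le
              positivity
          _ = (2/η) * Real.exp (η*|y|) := by rw [mul_assoc, h3])
      hbound_int
      (by
        filter_upwards with y s hs
        have : HasDerivAt (fun s : ℝ => -(s * y)) (-y) s := by
          simpa using (hasDerivAt_neg s).mul_const y
        simpa [mul_comm] using this.exp)
  obtain ⟨-, hd⟩ := key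
  have hF'0 : (∫ y, -y * Real.exp (-((0:ℝ) * y)) ∂ρ) = -lam := by
    simp only [zero_mul, neg_zero, Real.exp_zero, mul_one]
    exact integral_neg fun y => y
  rw [hF'0] at hd
  have hd' : HasDerivAt f (-lam) 0 := hd
  have hf0 : f 0 = 1 := by simp [hf]
  -- little-o
  have hlo := (hasDerivAt_iff_isLittleO.mp hd').bound (half_pos hdrift)
  rw [Metric.eventually_nhds_iff] at hlo
  obtain ⟨δ, hδ, hδe⟩ := hlo
  set s₀ := min (δ/2) (η/2) with hs₀
  have hs₀pos : 0 < s₀ := lt_min (half_pos hδ) (half_pos hη)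
  refine ⟨s₀, hs₀pos, lt_of_le_of_lt (min_le_right _ _) (half_lt_self hη), ?_⟩
  intro z hz1 hz2
  have hflt : f z.re < 1 := by
    have hmem : dist z.re (0:ℝ) < δ := by
      rw [Real.dist_eq, sub_zero, abs_of_pos hz1]
      calc z.re ≤ s₀ := hz2
        _ ≤ δ/2 := min_le_left _ _
        _ < δ := half_lt_self hδ
    have := hδe hmem
    simp only [hf0, sub_zero, smul_eq_mul, Real.norm_eq_abs] at this
    have habs := abs_le.mp this
    have h2 := habs.1
    have h3 := habs.2
    have hre : |z.re| = z.re := abs_of_pos hz1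
    rw [hre] at h3
    nlinarith [hdrift, hz1]
  calc ‖∫ y, Complex.exp (-z * (y : ℂ)) ∂ρ‖
      ≤ ∫ y, ‖Complex.exp (-z * (y : ℂ))‖ ∂ρ := norm_integral_le_integral_norm _
    _ = f z.re := by
        refine integral_congr_ae (Filter.Eventually.of_forall fun y => ?_)
        simp [Complex.norm_exp, Complex.mul_re]
    _ < 1 := hflt
end

section
/- Let ρ be a probability measure on ℝ with exponential moment and positive drift λ > 0. For a > 0 small enough (so that ∫ e^{-ay} dρ(y) < 1), and for any nonnegative Schwartz function f and x ∈ ℝ, the sum Σ_{n≥0} ∫ e^{-ay} f(x+y) d(ρ^{⋆n})(y) equals (1/2π) ∫_ℝ f̂(ξ) e^{iξx} (1 − ρ̂(a − iξ))^{-1} dξ, where f̂ is the Fourier transform of f. -/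
open MeasureTheory

noncomputable def convPow (ρ : Measure ℝ) : ℕ → Measure ℝ
  | 0 => Measure.dirac 0
  | n + 1 => ((convPow ρ n).prod ρ).map (fun p => p.1 + p.2)

/-!
Write `F = ĝ` for the Fourier transform in the angular normalisation of the statement. By Fourier
inversion, `e^{-ay} f(x + y) = (2π)⁻¹ ∫ F(ξ) e^{iξx} e^{-(a - iξ)y} dξ`; integrating in `y`
against `ρ^{⋆n}` and using Fubini, the `n`-th term of the series is
`(2π)⁻¹ ∫ F(ξ) e^{iξx} ρ̂(a - iξ)^n dξ`, because the Laplace transform turns convolution powers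
into powers. Since `|ρ̂(a - iξ)| ≤ ρ̂(a) < 1`, the geometric series in `n` is dominated by
`|F| ∑ ρ̂(a)^n`, which is integrable, so sum and integral may be exchanged.
-/

open Complex FourierTransform

lemma norm_cexp_neg_mul_ofReal (z : ℂ) (y : ℝ) : ‖cexp (-z * y)‖ = Real.exp (-z.re * y) := by
  simp [Complex.norm_exp, Complex.mul_re]

lemma norm_cexp_I_mul_ofReal_mul_ofReal (ξ u : ℝ) : ‖cexp (I * ξ * u)‖ = 1 := by
  rw [show I * ξ * u = ((ξ * u : ℝ) : ℂ) * I by push_cast; ring, norm_exp_ofReal_mul_I]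

lemma norm_integral_cexp_neg_mul_le {μ : Measure ℝ} (z : ℂ) :
    ‖∫ y, cexp (-z * y) ∂μ‖ ≤ ∫ y, Real.exp (-z.re * y) ∂μ :=
  (norm_integral_le_integral_norm _).trans_eq <| by simp_rw [norm_cexp_neg_mul_ofReal]

lemma integrable_exp_neg_mul_of_integrable_exp_mul_abs {μ : Measure ℝ} {a η : ℝ} (haη : |a| ≤ η)
    (h : Integrable (fun y => Real.exp (η * |y|)) μ) :
    Integrable (fun y => Real.exp (-a * y)) μ := by
  refine h.mono' (by fun_prop) (Filter.Eventually.of_forall fun y => ?_)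
  rw [Real.norm_eq_abs, Real.abs_exp, Real.exp_le_exp]
  calc -a * y ≤ |a| * |y| := by rw [← abs_mul, ← abs_neg, neg_mul]; exact le_abs_self _
    _ ≤ η * |y| := by gcongr

section convPow

variable (ρ : Measure ℝ)

lemma integrable_exp_neg_mul_convPow {a : ℝ} (h : Integrable (fun y => Real.exp (-a * y)) ρ)
    (n : ℕ) : Integrable (fun y => Real.exp (-a * y)) (convPow ρ n) := by
  induction n with
  | zero => exact integrable_dirac enorm_lt_top
  | succ n ih =>
    rw [convPow, integrable_map_measure (by fun_prop) (by fun_prop)]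
    refine (ih.mul_prod h).congr (ae_of_all _ fun p => ?_)
    simp only [Function.comp_apply, mul_add, Real.exp_add]

variable [SFinite ρ]

instance sFinite_convPow (n : ℕ) : SFinite (convPow ρ n) := by
  induction n <;> rw [convPow] <;> infer_instance

lemma integral_cexp_neg_mul_convPow (z : ℂ) (n : ℕ) :
    ∫ y, cexp (-z * y) ∂(convPow ρ n) = (∫ y, cexp (-z * y) ∂ρ) ^ n := by
  induction n with
  | zero => simp [convPow]
  | succ n ih =>
    rw [convPow, integral_map (by fun_prop) (by fun_prop), pow_succ, ← ih,
      ← integral_prod_mul]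
    simp [mul_add, Complex.exp_add]

end convPow

noncomputable def angularFourier (g : ℝ → ℂ) (ξ : ℝ) : ℂ :=
  ∫ u, g u * cexp (-(I * ξ) * u)

lemma angularFourier_eq_fourier (g : ℝ → ℂ) (ξ : ℝ) :
    angularFourier g ξ = 𝓕 g (ξ / (2 * Real.pi)) := by
  rw [Real.fourier_real_eq_integral_exp_smul, angularFourier]
  congr 1 with v
  rw [smul_eq_mul, mul_comm]
  congr 2
  push_cast
  field_simp

lemma integrable_angularFourier {g : ℝ → ℂ} (h : Integrable (𝓕 g)) :
    Integrable (angularFourier g) := by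
  simp_rw [funext (angularFourier_eq_fourier g)]
  exact h.comp_div (by positivity)

lemma angularFourier_inversion {g : ℝ → ℂ} (hc : Continuous g) (hg : Integrable g)
    (hFg : Integrable (𝓕 g)) (u : ℝ) :
    g u = 1 / (2 * Real.pi) * ∫ ξ, angularFourier g ξ * cexp (I * ξ * u) := by
  set H : ℝ → ℂ := fun w => 𝓕 g w * cexp (I * (2 * Real.pi * w) * u)
  have hH : ∀ ξ, angularFourier g ξ * cexp (I * ξ * u) = H (ξ / (2 * Real.pi)) := fun ξ => by
    rw [angularFourier_eq_fourier]
    congr 3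
    push_cast
    field_simp
  have hHg : ∫ w, H w = g u := by
    conv_rhs => rw [← hc.fourierInv_fourier_eq hg hFg, Real.fourierInv_eq']
    congr 1 with w
    simp only [H, smul_eq_mul, RCLike.inner_apply, conj_trivial]
    push_cast
    ring_nf
  simp_rw [hH, Measure.integral_comp_div H (2 * Real.pi), hHg,
    abs_of_pos Real.two_pi_pos, real_smul]
  push_cast
  field_simp

theorem hasSum_integral_mul_geometric {α : Type*} [MeasurableSpace α] {μ : Measure α}
    {F W : α → ℂ} {q : ℝ} (hF : Integrable F μ) (hW : AEStronglyMeasurable W μ)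
    (hWq : ∀ ξ, ‖W ξ‖ ≤ q) (hq0 : 0 ≤ q) (hq1 : q < 1) :
    HasSum (fun n : ℕ => ∫ ξ, F ξ * W ξ ^ n ∂μ) (∫ ξ, F ξ * (1 - W ξ)⁻¹ ∂μ) := by
  have hbound : ∀ n ξ, ‖F ξ * W ξ ^ n‖ ≤ ‖F ξ‖ * q ^ n := fun n ξ => by
    rw [norm_mul, norm_pow]; gcongr; exact hWq ξ
  have hint : ∀ n : ℕ, Integrable (fun ξ => F ξ * W ξ ^ n) μ := fun n =>
    (hF.norm.mul_const _).mono' (hF.1.mul (hW.pow n)) (Filter.Eventually.of_forall (hbound n))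
  have hsum : Summable fun n : ℕ => ∫ ξ, ‖F ξ * W ξ ^ n‖ ∂μ := by
    refine .of_nonneg_of_le (fun n => integral_nonneg fun ξ => norm_nonneg _) (fun n => ?_)
      ((summable_geometric_of_lt_one hq0 hq1).mul_left (∫ ξ, ‖F ξ‖ ∂μ))
    rw [← integral_mul_const]
    exact integral_mono (hint n).norm (hF.norm.mul_const _) (hbound n)
  have hgeom : ∀ ξ, ∑' n : ℕ, F ξ * W ξ ^ n = F ξ * (1 - W ξ)⁻¹ := fun ξ => by
    rw [tsum_mul_left, tsum_geometric_of_norm_lt_one ((hWq ξ).trans_lt hq1)]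
  simpa only [hgeom] using hasSum_integral_of_summable_integral_norm hint hsum

theorem integral_exp_mul_eq_integral_angularFourier {μ : Measure ℝ} [SFinite μ] {a : ℝ}
    (hμ : Integrable (fun y => Real.exp (-a * y)) μ) {g : ℝ → ℂ} (hc : Continuous g)
    (hg : Integrable g) (hFg : Integrable (𝓕 g)) (x : ℝ) :
    ∫ y, Real.exp (-a * y) * g (x + y) ∂μ = 1 / (2 * Real.pi) *
      ∫ ξ, angularFourier g ξ * cexp (I * ξ * x) * ∫ y, cexp (-(a - I * ξ) * y) ∂μ := by
  set Φ : ℝ × ℝ → ℂ := fun p =>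
    Real.exp (-a * p.1) * (angularFourier g p.2 * cexp (I * p.2 * (x + p.1)))
  have hΦ : Integrable Φ (μ.prod volume) := by
    have hexp : Continuous fun p : ℝ × ℝ => (Real.exp (-a * p.1) : ℂ) := by fun_prop
    refine (hμ.mul_prod (integrable_angularFourier hFg).norm).mono'
      (hexp.aestronglyMeasurable.mul ((integrable_angularFourier hFg).1.comp_snd.mul
        (by fun_prop))) (ae_of_all _ fun p => ?_)
    rw [norm_mul, norm_mul, ← ofReal_add, norm_cexp_I_mul_ofReal_mul_ofReal, mul_one,
      norm_real, Real.norm_of_nonneg (Real.exp_pos _).le]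
  have hinner : ∀ y, (Real.exp (-a * y) : ℂ) * g (x + y) = 1 / (2 * Real.pi) * ∫ ξ, Φ (y, ξ) :=
    fun y => by
      simp only [Φ]
      rw [integral_const_mul, angularFourier_inversion hc hg hFg (x + y), ofReal_add]
      ring
  have hphase : ∀ y ξ : ℝ, Φ (y, ξ) =
      angularFourier g ξ * cexp (I * ξ * x) * cexp (-(a - I * ξ) * y) := fun y ξ => by
    simp only [Φ, ofReal_exp]
    rw [mul_left_comm, ← Complex.exp_add, mul_assoc (angularFourier g ξ), ← Complex.exp_add]
    congr 2
    push_cast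
    ring
  simp_rw [hinner, integral_const_mul, integral_integral_swap (f := fun y ξ => Φ (y, ξ)) hΦ,
    hphase, integral_const_mul]

theorem stmt14_general (ρ : Measure ℝ) [IsProbabilityMeasure ρ] (η : ℝ)
    (hmom : Integrable (fun y => Real.exp (η * |y|)) ρ)
    (a : ℝ) (ha : 0 < a) (haη : a < η)
    (hsub : ∫ y, Real.exp (-a * y) ∂ρ < 1)
    (f : SchwartzMap ℝ ℝ) (x : ℝ) :
    ((∑' n : ℕ, ∫ y, Real.exp (-a * y) * f (x + y) ∂(convPow ρ n) : ℝ) : ℂ)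
      = (1 / (2 * Real.pi)) *
        ∫ ξ : ℝ, (∫ u : ℝ, ((f u : ℝ) : ℂ) * Complex.exp (-(Complex.I * ξ) * (u : ℂ)))
          * Complex.exp (Complex.I * ξ * x)
          * (1 - ∫ y, Complex.exp (-((a : ℂ) - Complex.I * ξ) * (y : ℂ)) ∂ρ)⁻¹ := by
  have hρ : Integrable (fun y => Real.exp (-a * y)) ρ :=
    integrable_exp_neg_mul_of_integrable_exp_mul_abs (abs_le.2 ⟨by linarith, haη.le⟩) hmom
  set g : SchwartzMap ℝ ℂ := f.postcompCLM (𝕜 := ℝ) ofRealCLM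
  have hFg : Integrable (𝓕 ⇑g) := by
    rw [← SchwartzMap.fourier_coe]
    exact (𝓕 g).integrable
  have hFgx : Integrable fun ξ : ℝ => angularFourier g ξ * cexp (I * ξ * x) :=
    (integrable_angularFourier hFg).mul_bdd (by fun_prop)
      (ae_of_all _ fun ξ => (norm_cexp_I_mul_ofReal_mul_ofReal ξ x).le)
  set W : ℝ → ℂ := fun ξ => ∫ y, cexp (-(a - I * ξ) * y) ∂ρ
  have hW : ∀ ξ, ‖W ξ‖ ≤ ∫ y, Real.exp (-a * y) ∂ρ := fun ξ =>
    (norm_integral_cexp_neg_mul_le _).trans_eq (by simp)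
  have hWm : AEStronglyMeasurable W :=
    (StronglyMeasurable.integral_prod_right' (f := fun p : ℝ × ℝ => cexp (-(a - I * p.1) * p.2))
      (by fun_prop)).aestronglyMeasurable
  have hterm : ∀ n, ((∫ y, Real.exp (-a * y) * f (x + y) ∂(convPow ρ n) : ℝ) : ℂ) =
      1 / (2 * Real.pi) * ∫ ξ, angularFourier g ξ * cexp (I * ξ * x) * W ξ ^ n := fun n => by
    rw [← integral_complex_ofReal]
    simp only [ofReal_mul, W, ← integral_cexp_neg_mul_convPow]
    exact integral_exp_mul_eq_integral_angularFourier (integrable_exp_neg_mul_convPow ρ hρ n)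
      g.continuous g.integrable hFg x
  rw [ofReal_tsum, tsum_congr hterm]
  exact ((hasSum_integral_mul_geometric hFgx hWm hW (integral_nonneg fun y => (Real.exp_pos _).le)
    hsub).mul_left _).tsum_eq

theorem stmt14 (ρ : Measure ℝ) [IsProbabilityMeasure ρ] (η : ℝ) (hη : 0 < η)
    (hmom : Integrable (fun y => Real.exp (η * |y|)) ρ)
    (hdrift : 0 < ∫ y, y ∂ρ)
    (a : ℝ) (ha : 0 < a) (haη : a < η)
    (hsub : ∫ y, Real.exp (-a * y) ∂ρ < 1)
    (f : SchwartzMap ℝ ℝ) (hf : ∀ x, 0 ≤ f x) (x : ℝ) :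
    ((∑' n : ℕ, ∫ y, Real.exp (-a * y) * f (x + y) ∂(convPow ρ n) : ℝ) : ℂ)
      = (1 / (2 * Real.pi)) *
        ∫ ξ : ℝ, (∫ u : ℝ, ((f u : ℝ) : ℂ) * Complex.exp (-(Complex.I * ξ) * (u : ℂ)))
          * Complex.exp (Complex.I * ξ * x)
          * (1 - ∫ y, Complex.exp (-((a : ℂ) - Complex.I * ξ) * (y : ℂ)) ∂ρ)⁻¹ :=
  stmt14_general ρ η hmom a ha haη hsub f x
end

section
/- Let η > 0, δ > η, and let A ⊆ {z ∈ ℂ : −η < Re(z) < 0} be a countable set with |a₁ − a₂| ≥ δ for distinct a₁,a₂ ∈ A. Let (u_a) ∈ ℓ¹(A) and let ω : ℝ₊ → [1,∞) be continuous, strictly sub-exponential, with Θ_ω(δ−η) = sup{|∫₀^∞ ω(x)e^{-zx}dx| : Re(z)>0, |z| ≥ δ−η} finite. Then Σ_{a∈A} |u_a|² ∫₀^∞ e^{2Re(a)x} ω(x) dx ≤ ∫₀^∞ ω(x) |Σ_{a∈A} u_a e^{ax}|² dx + Θ_ω(δ−η)·(Σ_{a∈A}|u_a|)². -/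
open MeasureTheory

private lemma omega_exp_integrable {ω : ℝ → ℝ} (hωc : Continuous ω)
    (hω0 : ∀ x, 0 ≤ x → 0 ≤ ω x)
    (hsubexp : ∀ ε > (0:ℝ),
      Filter.Tendsto (fun x => Real.exp (-ε * x) * ω x) Filter.atTop (nhds 0))
    {c : ℝ} (hc : 0 < c) :
    IntegrableOn (fun x => Real.exp (-c * x) * ω x) (Set.Ioi 0) := by
  have h2 := hsubexp (c/2) (by linarith)
  have hev : ∀ᶠ x in Filter.atTop, Real.exp (-(c/2) * x) * ω x ≤ 1 := by
    have := h2.eventually_le_const (by norm_num : (0:ℝ) < 1)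
    exact this
  obtain ⟨X, hX⟩ := (hev.and (Filter.eventually_ge_atTop (0:ℝ))).exists_forall_of_atTop
  have hXn : (0:ℝ) ≤ X := (hX X le_rfl).2
  have hunion : Set.Ioc (0:ℝ) X ∪ Set.Ioi X = Set.Ioi 0 := Set.Ioc_union_Ioi_eq_Ioi hXn
  rw [← hunion]
  apply IntegrableOn.union
  · exact ((Continuous.mul (by continuity) hωc)).integrableOn_Ioc
  · apply Integrable.mono' (exp_neg_integrableOn_Ioi X (by linarith : (0:ℝ) < c/2))
    · exact ((Continuous.mul (by continuity) hωc)).aestronglyMeasurable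
    · filter_upwards [ae_restrict_mem measurableSet_Ioi] with x hx
      have hx0 : (0:ℝ) ≤ x := le_trans hXn (le_of_lt hx)
      have hωx : 0 ≤ ω x := hω0 x hx0
      have h1 : Real.exp (-(c/2) * x) * ω x ≤ 1 := (hX x (le_of_lt hx)).1
      have : Real.exp (-c * x) = Real.exp (-(c/2) * x) * Real.exp (-(c/2) * x) := by
        rw [← Real.exp_add]; ring_nf
      rw [Real.norm_eq_abs, abs_of_nonneg (by positivity)]
      calc Real.exp (-c * x) * ω x
          = Real.exp (-(c/2) * x) * (Real.exp (-(c/2) * x) * ω x) := by rw [this]; ring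
        _ ≤ Real.exp (-(c/2) * x) * 1 := by
            apply mul_le_mul_of_nonneg_left h1 (le_of_lt (Real.exp_pos _))
        _ = Real.exp (-(c/2) * x) := mul_one _

private lemma integral_complex_ofReal_ {μ : MeasureTheory.Measure ℝ} {f : ℝ → ℝ} :
    ∫ x, ((f x : ℝ) : ℂ) ∂μ = ((∫ x, f x ∂μ : ℝ) : ℂ) := integral_ofReal

private lemma tsum_iSup_mono {ι : Type*} (f : ι → ℕ → ENNReal) (hf : ∀ i, Monotone (f i)) :
    ∑' i, (⨆ n, f i n) = ⨆ n, ∑' i, f i n := by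
  apply le_antisymm
  · rw [ENNReal.tsum_eq_iSup_sum]
    refine iSup_le fun s => ?_
    rw [ENNReal.finsetSum_iSup_of_monotone hf]
    exact iSup_mono fun n => ENNReal.sum_le_tsum s
  · exact iSup_le fun n => ENNReal.tsum_le_tsum fun i => le_iSup (f i) n

set_option maxHeartbeats 1000000 in
theorem stmt15 (η δ : ℝ) (hη : 0 < η) (hδ : η < δ)
    (A : Set ℂ) (hA : A.Countable)
    (hAstrip : ∀ a ∈ A, -η < a.re ∧ a.re < 0)
    (hsep : ∀ a₁ ∈ A, ∀ a₂ ∈ A, a₁ ≠ a₂ → δ ≤ ‖a₁ - a₂‖)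
    (u : ℂ → ℂ) (hu : Summable (fun a : A => ‖u a‖))
    (ω : ℝ → ℝ) (hωc : Continuous ω) (hω1 : ∀ x, 0 ≤ x → 1 ≤ ω x)
    (hsubexp : ∀ ε > (0:ℝ),
      Filter.Tendsto (fun x => Real.exp (-ε * x) * ω x) Filter.atTop (nhds 0))
    (Θ : ℝ)
    (hΘ : ∀ z : ℂ, 0 < z.re → δ - η ≤ ‖z‖ →
      ‖∫ x in Set.Ioi (0:ℝ), ((ω x : ℝ) : ℂ) * Complex.exp (-z * (x : ℂ))‖ ≤ Θ) :
    ∑' a : A, ENNReal.ofReal (‖u a‖ ^ 2) *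
        ∫⁻ x in Set.Ioi (0:ℝ), ENNReal.ofReal (Real.exp (2 * (a : ℂ).re * x) * ω x)
      ≤ (∫⁻ x in Set.Ioi (0:ℝ),
          ENNReal.ofReal (ω x * ‖∑' a : A, u a * Complex.exp ((a : ℂ) * (x : ℂ))‖ ^ 2))
        + ENNReal.ofReal (Θ * (∑' a : A, ‖u a‖) ^ 2) := by
  classical
  have hcount : Countable A := hA.to_subtype
  have hω0 : ∀ x, 0 ≤ x → 0 ≤ ω x := fun x hx => le_trans zero_le_one (hω1 x hx)
  set M : ℝ := ∑' a : A, ‖u a‖ with hM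
  have hM0 : 0 ≤ M := tsum_nonneg (fun a => norm_nonneg _)
  have hua_le : ∀ a : A, ‖u a‖ ≤ M := fun a => Summable.le_tsum hu a (fun b _ => norm_nonneg _)
  set S : ℝ → ℂ := fun x => ∑' a : A, u a * Complex.exp ((a : ℂ) * (x : ℂ)) with hSdef
  -- basic summability facts
  have hsumx : ∀ x : ℝ, 0 ≤ x → Summable (fun a : A => u a * Complex.exp ((a : ℂ) * (x : ℂ))) := by
    intro x hx
    apply Summable.of_norm_bounded hu
    intro a
    have ha := (hAstrip a a.2).2
    rw [norm_mul, Complex.norm_exp]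
    have : ((a : ℂ) * (x : ℂ)).re = (a : ℂ).re * x := by
      simp [Complex.mul_re]
    rw [this]
    have : Real.exp ((a:ℂ).re * x) ≤ 1 := by
      rw [Real.exp_le_one_iff]
      nlinarith
    nlinarith [norm_nonneg (u a)]
  have hSle : ∀ x : ℝ, 0 ≤ x → ‖S x‖ ≤ M := by
    intro x hx
    have h1 : Summable (fun a : A => ‖u a * Complex.exp ((a : ℂ) * (x : ℂ))‖) := by
      apply Summable.of_nonneg_of_le (fun a => norm_nonneg _) _ hu
      intro a
      have ha := (hAstrip a a.2).2
      rw [norm_mul, Complex.norm_exp]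
      have hre : ((a : ℂ) * (x : ℂ)).re = (a : ℂ).re * x := by simp [Complex.mul_re]
      rw [hre]
      have : Real.exp ((a:ℂ).re * x) ≤ 1 := by
        rw [Real.exp_le_one_iff]; nlinarith
      nlinarith [norm_nonneg (u a)]
    calc ‖S x‖ ≤ ∑' a : A, ‖u a * Complex.exp ((a : ℂ) * (x : ℂ))‖ :=
          norm_tsum_le_tsum_norm h1
      _ ≤ M := by
          apply Summable.tsum_le_tsum _ h1 hu
          intro a
          have ha := (hAstrip a a.2).2
          rw [norm_mul, Complex.norm_exp]
          have hre : ((a : ℂ) * (x : ℂ)).re = (a : ℂ).re * x := by simp [Complex.mul_re]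
          rw [hre]
          have : Real.exp ((a:ℂ).re * x) ≤ 1 := by
            rw [Real.exp_le_one_iff]; nlinarith
          nlinarith [norm_nonneg (u a)]
  -- measurability of S on Ioi 0
  have hSmeas : AEStronglyMeasurable S (volume.restrict (Set.Ioi 0)) := by
    have hTcont : Continuous (fun x : ℝ => ∑' a : A, u a * Complex.exp ((a : ℂ) * (|x| : ℝ))) := by
      apply continuous_tsum (u := fun a : A => ‖u a‖)
      · intro a; continuity
      · exact hu
      · intro a x
        have ha := (hAstrip a a.2).2
        rw [norm_mul, Complex.norm_exp]
        have hre : ((a : ℂ) * ((|x|:ℝ) : ℂ)).re = (a : ℂ).re * |x| := by simp [Complex.mul_re]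
        rw [hre]
        have : Real.exp ((a:ℂ).re * |x|) ≤ 1 := by
          rw [Real.exp_le_one_iff]
          nlinarith [abs_nonneg x]
        nlinarith [norm_nonneg (u a)]
    apply hTcont.aestronglyMeasurable.congr
    filter_upwards [ae_restrict_mem measurableSet_Ioi] with x hx
    have : |x| = x := abs_of_pos hx
    rw [this]
  have hΘ0 : 0 ≤ Θ := by
    refine le_trans (norm_nonneg _) (hΘ (δ : ℂ) ?_ ?_)
    · simp; linarith
    · rw [Complex.norm_real, Real.norm_eq_abs, abs_of_pos (by linarith)]
      linarith
  -- central estimate for each s > 0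
  have key : ∀ s : ℝ, 0 < s →
      (∑' a : A, ENNReal.ofReal (‖u a‖ ^ 2) *
        ∫⁻ x in Set.Ioi (0:ℝ),
          ENNReal.ofReal (Real.exp ((2 * (a : ℂ).re - s) * x) * ω x))
      ≤ (∫⁻ x in Set.Ioi (0:ℝ), ENNReal.ofReal (ω x * ‖S x‖ ^ 2))
        + ENNReal.ofReal (Θ * M ^ 2) := by
    intro s hs
    have hνK : IntegrableOn (fun x => Real.exp (-s*x) * ω x) (Set.Ioi 0) :=
      omega_exp_integrable hωc hω0 hsubexp hs
    set K : ℝ := ∫ x in Set.Ioi (0:ℝ), Real.exp (-s*x) * ω x with hKdef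
    have hK0 : 0 ≤ K := setIntegral_nonneg measurableSet_Ioi
      (fun x hx => mul_nonneg (Real.exp_pos _).le (hω0 x (le_of_lt hx)))
    -- the diagonal integrals
    have hJint : ∀ a : A,
        IntegrableOn (fun x => Real.exp ((2*(a:ℂ).re - s) * x) * ω x) (Set.Ioi 0) := by
      intro a
      have ha := (hAstrip a a.2).2
      have h := omega_exp_integrable hωc hω0 hsubexp
        (c := s - 2*(a:ℂ).re) (by nlinarith)
      have heq : (fun x => Real.exp (-(s - 2*(a:ℂ).re) * x) * ω x)
          = (fun x => Real.exp ((2*(a:ℂ).re - s) * x) * ω x) := by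
        funext x; ring_nf
      rwa [heq] at h
    set J : A → ℝ := fun a => ∫ x in Set.Ioi (0:ℝ), Real.exp ((2*(a:ℂ).re - s)*x) * ω x
      with hJdef
    have hJ0 : ∀ a : A, 0 ≤ J a := fun a => setIntegral_nonneg measurableSet_Ioi
      (fun x hx => mul_nonneg (Real.exp_pos _).le (hω0 x (le_of_lt hx)))
    have hJK : ∀ a : A, J a ≤ K := by
      intro a
      apply setIntegral_mono_on (hJint a) hνK measurableSet_Ioi
      intro x hx
      simp only [Set.mem_Ioi] at hx
      have ha := (hAstrip a a.2).2
      apply mul_le_mul_of_nonneg_right _ (hω0 x hx.le)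
      apply Real.exp_le_exp.2
      nlinarith
    -- the frequencies and cross integrals
    set z : A × A → ℂ := fun p => (s:ℂ) - (p.1:ℂ) - (starRingEnd ℂ) (p.2:ℂ) with hzdef
    have hzre : ∀ p : A × A, (z p).re = s - (p.1:ℂ).re - (p.2:ℂ).re := by
      intro p; simp [hzdef]
    have hzs : ∀ p : A × A, s ≤ (z p).re := by
      intro p
      have h1 := (hAstrip p.1 p.1.2).2
      have h2 := (hAstrip p.2 p.2.2).2
      rw [hzre]; linarith
    set W : A × A → ℂ :=
      fun p => ∫ x in Set.Ioi (0:ℝ), ((ω x : ℝ) : ℂ) * Complex.exp (-(z p) * (x:ℂ))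
      with hWdef
    have hnormint : ∀ (w : ℂ) (x : ℝ),
        ‖((ω x : ℝ) : ℂ) * Complex.exp (-w * (x:ℂ))‖ = |ω x| * Real.exp (-w.re * x) := by
      intro w x
      rw [norm_mul, Complex.norm_real, Real.norm_eq_abs,
        Complex.norm_exp]
      congr 2
      simp [Complex.mul_re]
    have hintnorm : ∀ p : A × A, IntegrableOn
        (fun x => ‖((ω x : ℝ) : ℂ) * Complex.exp (-(z p) * (x:ℂ))‖) (Set.Ioi 0) := by
      intro p
      apply Integrable.mono' hνK
      · apply Continuous.aestronglyMeasurable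
        apply Continuous.norm
        exact (Complex.continuous_ofReal.comp hωc).mul
          (Complex.continuous_exp.comp (continuous_const.mul Complex.continuous_ofReal))
      · filter_upwards [ae_restrict_mem measurableSet_Ioi] with x hx
        simp only [Set.mem_Ioi] at hx
        rw [norm_norm, hnormint, abs_of_nonneg (hω0 x hx.le)]
        rw [mul_comm (Real.exp (-s*x)) (ω x)]
        apply mul_le_mul_of_nonneg_left _ (hω0 x hx.le)
        apply Real.exp_le_exp.2
        have := hzs p
        nlinarith
    have hWnormle : ∀ p : A × A, ‖W p‖ ≤ K := by
      intro p
      calc ‖W p‖ ≤ ∫ x in Set.Ioi (0:ℝ), ‖((ω x : ℝ) : ℂ) * Complex.exp (-(z p) * (x:ℂ))‖ :=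
            norm_integral_le_integral_norm _
        _ ≤ K := by
            apply setIntegral_mono_on (hintnorm p) hνK measurableSet_Ioi
            intro x hx
            simp only [Set.mem_Ioi] at hx
            rw [hnormint, abs_of_nonneg (hω0 x hx.le), mul_comm (Real.exp (-s*x)) (ω x)]
            apply mul_le_mul_of_nonneg_left _ (hω0 x hx.le)
            apply Real.exp_le_exp.2
            have := hzs p
            nlinarith
    have hWoff : ∀ p : A × A, (p.1 : ℂ) ≠ (p.2 : ℂ) → ‖W p‖ ≤ Θ := by
      intro p hne
      apply hΘ (z p)
      · rw [hzre]
        have h1 := (hAstrip p.1 p.1.2).2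
        have h2 := (hAstrip p.2 p.2.2).2
        linarith
      · -- ‖z p‖ ≥ δ - η via imaginary parts
        have hsep' : δ ≤ ‖(p.1 : ℂ) - (p.2 : ℂ)‖ := hsep _ p.1.2 _ p.2.2 hne
        have hn0 : 0 ≤ ‖(p.1 : ℂ) - (p.2 : ℂ)‖ := norm_nonneg _
        have hsq : ‖(p.1 : ℂ) - (p.2 : ℂ)‖^2
            = ((p.1:ℂ).re - (p.2:ℂ).re)^2 + ((p.1:ℂ).im - (p.2:ℂ).im)^2 := by
          rw [Complex.sq_norm, Complex.normSq_apply]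
          simp [Complex.sub_re, Complex.sub_im]
          ring
        have hre1 := (hAstrip _ p.1.2).1
        have hre2 := (hAstrip _ p.1.2).2
        have hre3 := (hAstrip _ p.2.2).1
        have hre4 := (hAstrip _ p.2.2).2
        have him : (δ - η)^2 ≤ ((p.1:ℂ).im - (p.2:ℂ).im)^2 := by nlinarith
        have him' : δ - η ≤ |(p.1:ℂ).im - (p.2:ℂ).im| := by
          nlinarith [abs_nonneg ((p.1:ℂ).im - (p.2:ℂ).im), sq_abs ((p.1:ℂ).im - (p.2:ℂ).im)]
        have hzim : (z p).im = (p.2:ℂ).im - (p.1:ℂ).im := by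
          simp only [hzdef, Complex.sub_im, Complex.ofReal_im, Complex.conj_im]
          ring
        calc δ - η ≤ |(p.1:ℂ).im - (p.2:ℂ).im| := him'
          _ = |(z p).im| := by rw [hzim, abs_sub_comm]
          _ ≤ ‖z p‖ := Complex.abs_im_le_norm _
          _ = ‖z p‖ := rfl
    -- summability bookkeeping
    have hu' : Summable (fun a : A => ‖‖u a‖‖) := by simpa using hu
    have hprod : Summable (fun p : A × A => ‖u p.1‖ * ‖u p.2‖) :=
      summable_mul_of_summable_norm hu' hu'
    have hprodsum : ∑' p : A × A, ‖u p.1‖ * ‖u p.2‖ = M^2 := by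
      rw [hM, sq]
      exact (tsum_mul_tsum_of_summable_norm hu' hu').symm
    set I : A × A → ℂ := fun p => (u p.1 * (starRingEnd ℂ) (u p.2)) * W p with hIdef
    have hInorm : ∀ p : A × A, ‖I p‖ = ‖u p.1‖ * ‖u p.2‖ * ‖W p‖ := by
      intro p
      rw [hIdef]
      simp [norm_mul, RCLike.norm_conj]
    have hIsum : Summable I := by
      apply Summable.of_norm_bounded (hprod.mul_right K)
      intro p
      rw [hInorm]
      exact mul_le_mul_of_nonneg_left (hWnormle p)
        (mul_nonneg (norm_nonneg _) (norm_nonneg _))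
    -- the pointwise expansion
    have hnsum : ∀ x : ℝ, 0 ≤ x →
        Summable (fun a : A => ‖u a * Complex.exp ((a:ℂ) * (x:ℂ))‖) := by
      intro x hx
      apply Summable.of_nonneg_of_le (fun a => norm_nonneg _) _ hu
      intro a
      have ha := (hAstrip a a.2).2
      rw [norm_mul, Complex.norm_exp]
      have hre : ((a : ℂ) * (x : ℂ)).re = (a : ℂ).re * x := by simp [Complex.mul_re]
      rw [hre]
      have : Real.exp ((a:ℂ).re * x) ≤ 1 := by
        rw [Real.exp_le_one_iff]; nlinarith
      nlinarith [norm_nonneg (u a)]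
    have hptwise : ∀ x ∈ Set.Ioi (0:ℝ),
        ((Real.exp (-s*x) * (ω x * ‖S x‖^2) : ℝ) : ℂ)
        = ∑' p : A × A, (u p.1 * (starRingEnd ℂ) (u p.2))
            * (((ω x : ℝ) : ℂ) * Complex.exp (-(z p) * (x:ℂ))) := by
      intro x hx
      simp only [Set.mem_Ioi] at hx
      have hx0 : (0:ℝ) ≤ x := hx.le
      have h1 := hsumx x hx0
      have h1n := hnsum x hx0
      have hconj : (starRingEnd ℂ) (S x)
          = ∑' a : A, (starRingEnd ℂ) (u a * Complex.exp ((a:ℂ) * (x:ℂ))) := by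
        rw [hSdef]
        exact tsum_star
      have h2n : Summable (fun a : A =>
          ‖(starRingEnd ℂ) (u a * Complex.exp ((a:ℂ) * (x:ℂ)))‖) := by
        simpa [RCLike.norm_conj] using h1n
      have hmul : S x * (starRingEnd ℂ) (S x)
          = ∑' p : A × A, (u p.1 * Complex.exp ((p.1:ℂ) * (x:ℂ)))
              * (starRingEnd ℂ) (u p.2 * Complex.exp ((p.2:ℂ) * (x:ℂ))) := by
        rw [hconj]
        exact tsum_mul_tsum_of_summable_norm h1n h2n
      have hLHS : ((Real.exp (-s*x) * (ω x * ‖S x‖^2) : ℝ) : ℂ)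
          = (((Real.exp (-s*x) : ℝ) : ℂ) * ((ω x : ℝ) : ℂ))
            * (S x * (starRingEnd ℂ) (S x)) := by
        rw [Complex.mul_conj']
        push_cast
        ring
      rw [hLHS, hmul, ← tsum_mul_left]
      apply tsum_congr
      intro p
      have hconjterm : (starRingEnd ℂ) (u p.2 * Complex.exp ((p.2:ℂ) * (x:ℂ)))
          = (starRingEnd ℂ) (u p.2)
            * Complex.exp ((starRingEnd ℂ) (p.2:ℂ) * (x:ℂ)) := by
        rw [map_mul, ← Complex.exp_conj, map_mul, Complex.conj_ofReal]
      have hexp : Complex.exp (-(z p) * (x:ℂ))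
          = Complex.exp ((p.1:ℂ) * (x:ℂ)) * Complex.exp ((starRingEnd ℂ) (p.2:ℂ) * (x:ℂ))
            * Complex.exp (-(s:ℂ) * (x:ℂ)) := by
        rw [← Complex.exp_add, ← Complex.exp_add]
        congr 1
        rw [hzdef]
        ring
      have hexps : ((Real.exp (-s*x) : ℝ) : ℂ) = Complex.exp (-(s:ℂ) * (x:ℂ)) := by
        rw [Complex.ofReal_exp]
        push_cast
        ring_nf
      rw [hconjterm, hexp, hexps]
      ring
    -- exchanging sum and integral
    have hgmeas : ∀ p : A × A, AEStronglyMeasurable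
        (fun x : ℝ => (u p.1 * (starRingEnd ℂ) (u p.2))
          * (((ω x : ℝ) : ℂ) * Complex.exp (-(z p) * (x:ℂ))))
        (volume.restrict (Set.Ioi 0)) := by
      intro p
      apply Continuous.aestronglyMeasurable
      exact continuous_const.mul ((Complex.continuous_ofReal.comp hωc).mul
        (Complex.continuous_exp.comp (continuous_const.mul Complex.continuous_ofReal)))
    have hgfin : ∑' p : A × A, ∫⁻ x in Set.Ioi (0:ℝ),
        ‖(u p.1 * (starRingEnd ℂ) (u p.2))
          * (((ω x : ℝ) : ℂ) * Complex.exp (-(z p) * (x:ℂ)))‖₊ ≠ ⊤ := by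
      have hbound : ∀ p : A × A, (∫⁻ x in Set.Ioi (0:ℝ),
          ‖(u p.1 * (starRingEnd ℂ) (u p.2))
            * (((ω x : ℝ) : ℂ) * Complex.exp (-(z p) * (x:ℂ)))‖₊)
          ≤ ENNReal.ofReal (‖u p.1‖ * ‖u p.2‖) * ENNReal.ofReal K := by
        intro p
        have hle : (∫⁻ x in Set.Ioi (0:ℝ),
            ‖(u p.1 * (starRingEnd ℂ) (u p.2))
              * (((ω x : ℝ) : ℂ) * Complex.exp (-(z p) * (x:ℂ)))‖₊)
            ≤ ∫⁻ x in Set.Ioi (0:ℝ),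
              ENNReal.ofReal (‖u p.1‖ * ‖u p.2‖ * (Real.exp (-s*x) * ω x)) := by
          apply lintegral_mono_ae
          filter_upwards [ae_restrict_mem measurableSet_Ioi] with x hx
          simp only [Set.mem_Ioi] at hx
          rw [← ENNReal.ofReal_coe_nnreal, coe_nnnorm]
          apply ENNReal.ofReal_le_ofReal
          rw [norm_mul, norm_mul, RCLike.norm_conj, hnormint,
            abs_of_nonneg (hω0 x hx.le)]
          rw [mul_comm (Real.exp (-s*x)) (ω x)]
          apply mul_le_mul_of_nonneg_left _
            (mul_nonneg (norm_nonneg _) (norm_nonneg _))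
          apply mul_le_mul_of_nonneg_left _ (hω0 x hx.le)
          apply Real.exp_le_exp.2
          have := hzs p
          nlinarith
        refine le_trans hle ?_
        rw [show (fun x => ENNReal.ofReal (‖u p.1‖ * ‖u p.2‖ * (Real.exp (-s*x) * ω x)))
            = (fun x => ENNReal.ofReal (‖u p.1‖ * ‖u p.2‖)
              * ENNReal.ofReal (Real.exp (-s*x) * ω x)) from funext fun x => by
          rw [ENNReal.ofReal_mul (mul_nonneg (norm_nonneg _) (norm_nonneg _))]]
        rw [lintegral_const_mul' _ _ ENNReal.ofReal_ne_top]
        apply mul_le_mul_right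
        rw [← MeasureTheory.ofReal_integral_eq_lintegral_ofReal hνK]
        filter_upwards [ae_restrict_mem measurableSet_Ioi] with x hx
        simp only [Set.mem_Ioi] at hx
        exact mul_nonneg (Real.exp_pos _).le (hω0 x hx.le)
      have hcalc : ∑' p : A × A, ∫⁻ x in Set.Ioi (0:ℝ),
            ‖(u p.1 * (starRingEnd ℂ) (u p.2))
              * (((ω x : ℝ) : ℂ) * Complex.exp (-(z p) * (x:ℂ)))‖₊
          ≤ ENNReal.ofReal (M^2) * ENNReal.ofReal K := by
        calc ∑' p : A × A, ∫⁻ x in Set.Ioi (0:ℝ),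
              ‖(u p.1 * (starRingEnd ℂ) (u p.2))
                * (((ω x : ℝ) : ℂ) * Complex.exp (-(z p) * (x:ℂ)))‖₊
            ≤ ∑' p : A × A, ENNReal.ofReal (‖u p.1‖ * ‖u p.2‖) * ENNReal.ofReal K :=
              ENNReal.tsum_le_tsum hbound
          _ = (∑' p : A × A, ENNReal.ofReal (‖u p.1‖ * ‖u p.2‖)) * ENNReal.ofReal K :=
              ENNReal.tsum_mul_right
          _ = ENNReal.ofReal (M^2) * ENNReal.ofReal K := by
              rw [← ENNReal.ofReal_tsum_of_nonneg
                (fun p => mul_nonneg (norm_nonneg _) (norm_nonneg _)) hprod, hprodsum]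
      exact ne_top_of_le_ne_top
        (ENNReal.mul_ne_top ENNReal.ofReal_ne_top ENNReal.ofReal_ne_top) hcalc
    set Is : ℝ := ∫ x in Set.Ioi (0:ℝ), Real.exp (-s*x) * (ω x * ‖S x‖^2) with hIsdef
    have hident : ((Is : ℝ) : ℂ) = ∑' p : A × A, I p := by
      rw [hIsdef, ← integral_complex_ofReal_,
        MeasureTheory.setIntegral_congr_fun measurableSet_Ioi hptwise,
        MeasureTheory.integral_tsum hgmeas hgfin]
      apply tsum_congr
      intro p
      rw [MeasureTheory.integral_const_mul]
    -- diagonal terms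
    have hdiagval : ∀ a : A, I (a, a) = ((‖u a‖^2 * J a : ℝ) : ℂ) := by
      intro a
      have hWa : W (a, a) = ((J a : ℝ) : ℂ) := by
        have hintg : ∀ x : ℝ, ((ω x : ℝ) : ℂ) * Complex.exp (-(z (a,a)) * (x:ℂ))
            = ((Real.exp ((2*(a:ℂ).re - s)*x) * ω x : ℝ) : ℂ) := by
          intro x
          have hz : -(z (a,a)) * (x:ℂ) = (((2*(a:ℂ).re - s)*x : ℝ) : ℂ) := by
            have hcj : ((a:ℂ) : ℂ) + (starRingEnd ℂ) ((a:ℂ)) = ((2*(a:ℂ).re : ℝ) : ℂ) :=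
              Complex.add_conj _
            rw [show -(z (a,a)) = ((a:ℂ) + (starRingEnd ℂ) ((a:ℂ))) - (s:ℂ) by
              rw [hzdef]; ring]
            rw [hcj]
            push_cast
            ring
          rw [hz, ← Complex.ofReal_exp]
          push_cast
          ring
        rw [hWdef]
        simp only [hintg]
        rw [integral_complex_ofReal_, hJdef]
      simp only [hIdef]
      rw [hWa, Complex.mul_conj']
      push_cast
      ring
    have hDsum : Summable (fun a : A => ‖u a‖^2 * J a) := by
      apply Summable.of_nonneg_of_le (fun a => mul_nonneg (sq_nonneg _) (hJ0 a)) _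
        (hu.mul_left (M*K))
      intro a
      nlinarith [mul_nonneg (norm_nonneg (u a))
          (mul_nonneg (sub_nonneg.2 (hua_le a)) (hJ0 a)),
        mul_nonneg hM0 (mul_nonneg (norm_nonneg (u a)) (sub_nonneg.2 (hJK a)))]
    set D : ℝ := ∑' a : A, ‖u a‖^2 * J a with hDdef
    -- splitting off the diagonal
    have hOsummand : ∀ p : A × A, ‖if p.1 = p.2 then (0:ℂ) else I p‖
        ≤ ‖u p.1‖ * ‖u p.2‖ * K := by
      intro p
      split
      · simp only [norm_zero]
        positivity
      · rw [hInorm]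
        exact mul_le_mul_of_nonneg_left (hWnormle p)
          (mul_nonneg (norm_nonneg _) (norm_nonneg _))
    have hDsummand : ∀ p : A × A, ‖if p.1 = p.2 then I p else (0:ℂ)‖
        ≤ ‖u p.1‖ * ‖u p.2‖ * K := by
      intro p
      split
      · rw [hInorm]
        exact mul_le_mul_of_nonneg_left (hWnormle p)
          (mul_nonneg (norm_nonneg _) (norm_nonneg _))
      · simp only [norm_zero]
        positivity
    have hOsum : Summable (fun p : A × A => if p.1 = p.2 then (0:ℂ) else I p) :=
      Summable.of_norm_bounded (hprod.mul_right K) hOsummand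
    have hDsumC : Summable (fun p : A × A => if p.1 = p.2 then I p else (0:ℂ)) :=
      Summable.of_norm_bounded (hprod.mul_right K) hDsummand
    have hdiagtsum : (∑' p : A × A, if p.1 = p.2 then I p else (0:ℂ))
        = ∑' a : A, I (a, a) := by
      apply tsum_eq_tsum_of_ne_zero_bij
        (fun (a : Function.support (fun a : A => I (a, a))) => ((a : A), (a : A)))
      · intro x y hxy
        simp only [Prod.mk.injEq] at hxy
        exact Subtype.ext hxy.1
      · intro p hp
        simp only [Function.mem_support] at hp
        by_cases hpd : p.1 = p.2
        · rw [if_pos hpd] at hp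
          have hpp : p = (p.1, p.1) := by
            rw [Prod.ext_iff]; exact ⟨rfl, hpd.symm⟩
          refine ⟨⟨p.1, ?_⟩, ?_⟩
          · simp only [Function.mem_support]
            rw [hpp] at hp
            exact hp
          · exact hpp.symm
        · rw [if_neg hpd] at hp
          exact absurd rfl hp
      · intro x
        simp
    have hsplit : (∑' p : A × A, I p)
        = (∑' a : A, I (a, a)) + ∑' p : A × A, (if p.1 = p.2 then (0:ℂ) else I p) := by
      rw [← hdiagtsum, ← Summable.tsum_add hDsumC hOsum]
      apply tsum_congr
      intro p
      split <;> simp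
    have hdiagC : (∑' a : A, I (a, a)) = ((D : ℝ) : ℂ) := by
      rw [hDdef, Complex.ofReal_tsum]
      apply tsum_congr
      exact hdiagval
    -- bound on the off-diagonal part
    have hOnorms : Summable (fun p : A × A => ‖if p.1 = p.2 then (0:ℂ) else I p‖) :=
      Summable.of_nonneg_of_le (fun p => norm_nonneg _) hOsummand (hprod.mul_right K)
    have hOle : ‖∑' p : A × A, (if p.1 = p.2 then (0:ℂ) else I p)‖ ≤ Θ * M^2 := by
      calc ‖∑' p : A × A, (if p.1 = p.2 then (0:ℂ) else I p)‖
          ≤ ∑' p : A × A, ‖if p.1 = p.2 then (0:ℂ) else I p‖ :=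
            norm_tsum_le_tsum_norm hOnorms
        _ ≤ ∑' p : A × A, ‖u p.1‖ * ‖u p.2‖ * Θ := by
            apply Summable.tsum_le_tsum _ hOnorms (hprod.mul_right Θ)
            intro p
            split
            · simp only [norm_zero]
              positivity
            · rw [hInorm]
              apply mul_le_mul_of_nonneg_left _
                (mul_nonneg (norm_nonneg _) (norm_nonneg _))
              apply hWoff
              intro hc
              exact (by assumption : ¬ p.1 = p.2) (Subtype.ext hc)
        _ = Θ * M^2 := by
            rw [tsum_mul_right, hprodsum]
            ring
    -- the real inequality
    have hreal : D ≤ Is + Θ * M^2 := by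
      have h1 : ((Is : ℝ) : ℂ) = ((D : ℝ) : ℂ)
          + ∑' p : A × A, (if p.1 = p.2 then (0:ℂ) else I p) := by
        rw [hident, hsplit, hdiagC]
      have h2 : Is = D + (∑' p : A × A, (if p.1 = p.2 then (0:ℂ) else I p)).re := by
        have := congrArg Complex.re h1
        simpa using this
      have h3 : -(∑' p : A × A, (if p.1 = p.2 then (0:ℂ) else I p)).re ≤ Θ * M^2 := by
        have h4 := Complex.abs_re_le_norm (∑' p : A × A, (if p.1 = p.2 then (0:ℂ) else I p))
        have := neg_abs_le (∑' p : A × A, (if p.1 = p.2 then (0:ℂ) else I p)).re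
        linarith [hOle]
      linarith
    -- integrability of the main integrand
    have hIsint : IntegrableOn (fun x => Real.exp (-s*x) * (ω x * ‖S x‖^2)) (Set.Ioi 0) := by
      apply Integrable.mono' (hνK.const_mul (M^2))
      · have hmeas : AEStronglyMeasurable (fun x => Real.exp (-s*x) * (ω x * (‖S x‖ * ‖S x‖)))
            (volume.restrict (Set.Ioi 0)) := by
          exact ((Real.continuous_exp.comp (continuous_const.mul continuous_id)).aestronglyMeasurable).mul
            ((hωc.aestronglyMeasurable).mul (hSmeas.norm.mul hSmeas.norm))
        have : (fun x => Real.exp (-s*x) * (ω x * ‖S x‖^2))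
            = (fun x => Real.exp (-s*x) * (ω x * (‖S x‖ * ‖S x‖))) := by
          funext x; ring
        rw [this]
        exact hmeas
      · filter_upwards [ae_restrict_mem measurableSet_Ioi] with x hx
        simp only [Set.mem_Ioi] at hx
        have hS := hSle x hx.le
        have hωx := hω0 x hx.le
        rw [Real.norm_eq_abs, abs_of_nonneg (by positivity)]
        have hexp := (Real.exp_pos (-s*x)).le
        have hSS : ‖S x‖^2 ≤ M^2 := by nlinarith [norm_nonneg (S x)]
        nlinarith [mul_nonneg (mul_nonneg hexp hωx) (sub_nonneg.2 hSS)]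
    have hIs0 : 0 ≤ Is := setIntegral_nonneg measurableSet_Ioi
      (fun x hx => mul_nonneg (Real.exp_pos _).le
        (mul_nonneg (hω0 x (le_of_lt hx)) (sq_nonneg _)))
    have hIsle : ENNReal.ofReal Is ≤ ∫⁻ x in Set.Ioi (0:ℝ),
        ENNReal.ofReal (ω x * ‖S x‖^2) := by
      rw [hIsdef, MeasureTheory.ofReal_integral_eq_lintegral_ofReal hIsint]
      · apply lintegral_mono_ae
        filter_upwards [ae_restrict_mem measurableSet_Ioi] with x hx
        simp only [Set.mem_Ioi] at hx
        apply ENNReal.ofReal_le_ofReal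
        apply mul_le_of_le_one_left (mul_nonneg (hω0 x hx.le) (sq_nonneg _))
        exact Real.exp_le_one_iff.2 (by nlinarith)
      · filter_upwards [ae_restrict_mem measurableSet_Ioi] with x hx
        simp only [Set.mem_Ioi] at hx
        exact mul_nonneg (Real.exp_pos _).le
          (mul_nonneg (hω0 x hx.le) (sq_nonneg _))
    -- conclusion in ENNReal
    calc ∑' a : A, ENNReal.ofReal (‖u a‖ ^ 2) *
          ∫⁻ x in Set.Ioi (0:ℝ),
            ENNReal.ofReal (Real.exp ((2 * (a : ℂ).re - s) * x) * ω x)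
        = ∑' a : A, ENNReal.ofReal (‖u a‖^2 * J a) := by
          apply tsum_congr
          intro a
          have hnn : 0 ≤ᵐ[volume.restrict (Set.Ioi 0)]
              fun x => Real.exp ((2 * (a:ℂ).re - s) * x) * ω x := by
            filter_upwards [ae_restrict_mem measurableSet_Ioi] with x hx
            exact mul_nonneg (Real.exp_pos _).le (hω0 x (le_of_lt hx))
          rw [← MeasureTheory.ofReal_integral_eq_lintegral_ofReal (hJint a) hnn,
            ← ENNReal.ofReal_mul (sq_nonneg _)]
      _ = ENNReal.ofReal D := by
          rw [hDdef, ENNReal.ofReal_tsum_of_nonneg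
            (fun a => mul_nonneg (sq_nonneg _) (hJ0 a)) hDsum]
      _ ≤ ENNReal.ofReal (Is + Θ * M^2) := ENNReal.ofReal_le_ofReal hreal
      _ ≤ ENNReal.ofReal Is + ENNReal.ofReal (Θ * M^2) := ENNReal.ofReal_add_le
      _ ≤ (∫⁻ x in Set.Ioi (0:ℝ), ENNReal.ofReal (ω x * ‖S x‖ ^ 2))
          + ENNReal.ofReal (Θ * M ^ 2) := add_le_add hIsle le_rfl
  -- monotone convergence in s
  have hrw : ∀ a : A,
      (∫⁻ x in Set.Ioi (0:ℝ), ENNReal.ofReal (Real.exp (2 * (a : ℂ).re * x) * ω x))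
      = ⨆ n : ℕ, ∫⁻ x in Set.Ioi (0:ℝ),
          ENNReal.ofReal (Real.exp ((2 * (a : ℂ).re - 1/(n+1)) * x) * ω x) := by
    intro a
    rw [← MeasureTheory.lintegral_iSup']
    · apply lintegral_congr_ae
      filter_upwards [ae_restrict_mem measurableSet_Ioi] with x hx
      simp only [Set.mem_Ioi] at hx
      apply le_antisymm
      · -- the pointwise limit
        have htend : Filter.Tendsto
            (fun n : ℕ => ENNReal.ofReal (Real.exp ((2 * (a : ℂ).re - 1/(n+1)) * x) * ω x))
            Filter.atTop (nhds (ENNReal.ofReal (Real.exp (2 * (a : ℂ).re * x) * ω x))) := by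
          apply (ENNReal.continuous_ofReal.tendsto _).comp
          have h0 : Filter.Tendsto (fun n : ℕ => 1/((n:ℝ)+1)) Filter.atTop (nhds 0) :=
            tendsto_one_div_add_atTop_nhds_zero_nat
          have : Filter.Tendsto (fun n : ℕ => (2 * (a : ℂ).re - 1/(n+1)) * x)
              Filter.atTop (nhds (2 * (a : ℂ).re * x)) := by
            have := ((tendsto_const_nhds (x := 2 * (a : ℂ).re)).sub h0).mul_const x
            simpa using this
          exact ((Real.continuous_exp.tendsto _).comp this).mul_const (ω x)
        have hmono : Monotone (fun n : ℕ =>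
            ENNReal.ofReal (Real.exp ((2 * (a : ℂ).re - 1/(n+1)) * x) * ω x)) := by
          intro n m hnm
          apply ENNReal.ofReal_le_ofReal
          apply mul_le_mul_of_nonneg_right _ (hω0 x (le_of_lt hx))
          apply Real.exp_le_exp.2
          have h1 : 1/((m:ℝ)+1) ≤ 1/((n:ℝ)+1) := by
            apply one_div_le_one_div_of_le (by positivity)
            exact_mod_cast by omega
          nlinarith [hx.le]
        rw [← iSup_eq_of_tendsto hmono htend]
      · apply iSup_le
        intro n
        apply ENNReal.ofReal_le_ofReal
        apply mul_le_mul_of_nonneg_right _ (hω0 x (le_of_lt hx))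
        apply Real.exp_le_exp.2
        have h1 : (0:ℝ) < 1/((n:ℝ)+1) := by positivity
        nlinarith [hx.le]
    · intro n
      apply Continuous.aemeasurable
      exact ENNReal.continuous_ofReal.comp
        ((Real.continuous_exp.comp (continuous_const.mul continuous_id)).mul hωc)
    · filter_upwards [ae_restrict_mem measurableSet_Ioi] with x hx
      simp only [Set.mem_Ioi] at hx
      intro n m hnm
      apply ENNReal.ofReal_le_ofReal
      apply mul_le_mul_of_nonneg_right _ (hω0 x (le_of_lt hx))
      apply Real.exp_le_exp.2
      have h1 : 1/((m:ℝ)+1) ≤ 1/((n:ℝ)+1) := by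
        apply one_div_le_one_div_of_le (by positivity)
        exact_mod_cast by omega
      nlinarith [hx.le]
  calc ∑' a : A, ENNReal.ofReal (‖u a‖ ^ 2) *
        ∫⁻ x in Set.Ioi (0:ℝ), ENNReal.ofReal (Real.exp (2 * (a : ℂ).re * x) * ω x)
      = ∑' a : A, ⨆ n : ℕ, ENNReal.ofReal (‖u a‖ ^ 2) *
          ∫⁻ x in Set.Ioi (0:ℝ),
            ENNReal.ofReal (Real.exp ((2 * (a : ℂ).re - 1/(n+1)) * x) * ω x) := by
        apply tsum_congr
        intro a
        rw [hrw a, ENNReal.mul_iSup]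
    _ = ⨆ n : ℕ, ∑' a : A, ENNReal.ofReal (‖u a‖ ^ 2) *
          ∫⁻ x in Set.Ioi (0:ℝ),
            ENNReal.ofReal (Real.exp ((2 * (a : ℂ).re - 1/(n+1)) * x) * ω x) := by
        apply tsum_iSup_mono
        intro a n m hnm
        apply mul_le_mul_right
        apply lintegral_mono_ae
        filter_upwards [ae_restrict_mem measurableSet_Ioi] with x hx
        simp only [Set.mem_Ioi] at hx
        apply ENNReal.ofReal_le_ofReal
        apply mul_le_mul_of_nonneg_right _ (hω0 x (le_of_lt hx))
        apply Real.exp_le_exp.2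
        have h1 : 1/((m:ℝ)+1) ≤ 1/((n:ℝ)+1) := by
          apply one_div_le_one_div_of_le (by positivity)
          exact_mod_cast by omega
        nlinarith [hx.le]
    _ ≤ (∫⁻ x in Set.Ioi (0:ℝ), ENNReal.ofReal (ω x * ‖S x‖ ^ 2))
        + ENNReal.ofReal (Θ * M ^ 2) := by
        apply iSup_le
        intro n
        exact key (1/(n+1)) (by positivity)
end

section
/- For every A > 0 and α ∈ (0,1) and every real t > 0, ∫₀^∞ e^{Ax^α − tx} dx = (1/t) Σ_{k=0}^∞ (A/t^α)^k Γ(αk+1)/Γ(k+1), where the series converges absolutely. Moreover, for every δ > 0, sup over complex z with Re(z) > 0 and |z| ≥ δ of |∫₀^∞ e^{Ax^α} e^{-zx} dx| is finite. -/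
/-!
Expanding `exp (A * x ^ α) = ∑ (A * x ^ α) ^ k / k!` and integrating termwise against
`exp (-z * x)` with `∫ x ^ s * exp (-z * x) = Γ(s + 1) * z ^ (-(s + 1))` gives the series
`∑ A ^ k / k! * Γ(α k + 1) * z ^ (-(α k + 1))`. The exchange of sum and integral is justified
by the same series with `z` replaced by `z.re`, which converges by the ratio test:
log-convexity of `Γ` gives `Γ(x + α) ≤ Γ(x) * x ^ α`, so consecutive terms have ratio
`O(k ^ (α - 1))`. Since `‖z ^ (-(α k + 1))‖ ≤ δ ^ (-(α k + 1))` for `δ ≤ ‖z‖`, the series is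
bounded uniformly there.
-/

open MeasureTheory Set Filter Topology Nat

namespace Real

theorem Gamma_add_le_mul_rpow {α x : ℝ} (hα0 : 0 < α) (hα1 : α < 1) (hx : 0 < x) :
    Gamma (x + α) ≤ Gamma x * x ^ α := by
  have hΓ := Gamma_pos_of_pos hx
  have h := Gamma_mul_add_mul_le_rpow_Gamma_mul_rpow_Gamma hx (hx.trans (lt_add_one x))
    (sub_pos.2 hα1) hα0 (sub_add_cancel 1 α)
  calc Gamma (x + α) = Gamma ((1 - α) * x + α * (x + 1)) := by ring_nf
    _ ≤ Gamma x ^ (1 - α) * Gamma (x + 1) ^ α := h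
    _ = Gamma x * x ^ α := by
      rw [Gamma_add_one hx.ne', mul_rpow hx.le hΓ.le, mul_left_comm, ← rpow_add hΓ,
        sub_add_cancel, rpow_one, mul_comm]

theorem Gamma_mul_succ_add_one_div_factorial_le {α : ℝ} (hα0 : 0 < α) (hα1 : α < 1) (k : ℕ) :
    Gamma (α * (k + 1 : ℕ) + 1) / (k + 1 : ℕ)!
      ≤ ((k : ℝ) + 1) ^ (α - 1) * (Gamma (α * k + 1) / k !) := by
  have hk : (0 : ℝ) < k + 1 := by positivity
  have hαk : 0 < α * k + 1 := by positivity
  have hΓ : Gamma (α * (k + 1 : ℕ) + 1) ≤ Gamma (α * k + 1) * ((k : ℝ) + 1) ^ α :=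
    calc Gamma (α * (k + 1 : ℕ) + 1) = Gamma (α * k + 1 + α) := by push_cast; ring_nf
      _ ≤ Gamma (α * k + 1) * (α * k + 1) ^ α := Gamma_add_le_mul_rpow hα0 hα1 hαk
      _ ≤ Gamma (α * k + 1) * ((k : ℝ) + 1) ^ α := by
        gcongr
        nlinarith [(k.cast_nonneg : (0 : ℝ) ≤ k)]
  calc Gamma (α * (k + 1 : ℕ) + 1) / (k + 1 : ℕ)!
      ≤ Gamma (α * k + 1) * ((k : ℝ) + 1) ^ α / (((k : ℝ) + 1) * k !) := by
        rw [factorial_succ, cast_mul]; push_cast at hΓ ⊢; gcongr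
    _ = ((k : ℝ) + 1) ^ (α - 1) * (Gamma (α * k + 1) / k !) := by
        rw [rpow_sub_one hk.ne']; field_simp

theorem summable_pow_mul_Gamma_div_factorial {α : ℝ} (hα0 : 0 < α) (hα1 : α < 1) (r : ℝ) :
    Summable fun k : ℕ => r ^ k * (Gamma (α * k + 1) / k !) := by
  have hratio : Tendsto (fun k : ℕ => |r| * ((k : ℝ) + 1) ^ (α - 1)) atTop (𝓝 0) := by
    have := (tendsto_rpow_neg_atTop (sub_pos.2 hα1)).comp
      (tendsto_atTop_add_const_right _ 1 tendsto_natCast_atTop_atTop)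
    simpa [Function.comp_def] using this.const_mul |r|
  refine summable_of_ratio_norm_eventually_le (r := 1 / 2) (by norm_num) ?_
  filter_upwards [hratio.eventually (eventually_le_nhds one_half_pos)] with k hk
  have hG (n : ℕ) : 0 ≤ Gamma (α * n + 1) / n ! := by
    have := Gamma_pos_of_pos (by positivity : 0 < α * n + 1); positivity
  rw [norm_mul, norm_mul, norm_pow, norm_pow, norm_of_nonneg (hG _), norm_of_nonneg (hG _),
    pow_succ]
  calc |r| ^ k * |r| * (Gamma (α * (k + 1 : ℕ) + 1) / (k + 1 : ℕ)!)
      ≤ |r| ^ k * |r| * (((k : ℝ) + 1) ^ (α - 1) * (Gamma (α * k + 1) / k !)) := by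
        gcongr; exact Gamma_mul_succ_add_one_div_factorial_le hα0 hα1 k
    _ = (|r| * ((k : ℝ) + 1) ^ (α - 1)) * (|r| ^ k * (Gamma (α * k + 1) / k !)) := by ring
    _ ≤ 1 / 2 * (|r| ^ k * (Gamma (α * k + 1) / k !)) := by gcongr

theorem integral_rpow_mul_exp_neg_mul_Ioi_eq_Gamma_mul_rpow {s r : ℝ} (hs : -1 < s) (hr : 0 < r) :
    ∫ x in Ioi (0 : ℝ), x ^ s * exp (-(r * x)) = Gamma (s + 1) * r ^ (-(s + 1)) := by
  have h := integral_rpow_mul_exp_neg_mul_Ioi (by linarith : 0 < s + 1) hr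
  rwa [add_sub_cancel_right, one_div, inv_rpow hr.le, ← rpow_neg hr.le, mul_comm] at h

theorem pow_div_factorial_mul_Gamma_mul_rpow_neg (α B : ℝ) {t : ℝ} (ht : 0 < t) (k : ℕ) :
    B ^ k / k ! * Gamma (α * k + 1) * t ^ (-(α * k + 1))
      = t⁻¹ * ((B / t ^ α) ^ k * (Gamma (α * k + 1) / k !)) := by
  rw [neg_add, rpow_add ht, rpow_neg_one, rpow_neg ht.le, rpow_mul_natCast ht.le, div_pow]
  field_simp

theorem summable_pow_div_factorial_mul_Gamma_mul_rpow_neg {α : ℝ} (hα0 : 0 < α) (hα1 : α < 1)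
    (B : ℝ) {t : ℝ} (ht : 0 < t) :
    Summable fun k : ℕ => B ^ k / k ! * Gamma (α * k + 1) * t ^ (-(α * k + 1)) := by
  simpa only [pow_div_factorial_mul_Gamma_mul_rpow_neg α B ht] using
    (summable_pow_mul_Gamma_div_factorial hα0 hα1 (B / t ^ α)).mul_left t⁻¹

end Real

section LaplacePower

variable {s : ℝ}

theorem norm_rpow_mul_cexp_neg_mul (z : ℂ) {x : ℝ} (hx : 0 ≤ x) :
    ‖((x ^ s : ℝ) : ℂ) * Complex.exp (-(z * x))‖ = x ^ s * Real.exp (-(z.re * x)) := by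
  rw [norm_mul, Complex.norm_exp, Complex.norm_real, Real.norm_of_nonneg (Real.rpow_nonneg hx s)]
  simp

theorem integrableOn_rpow_mul_exp_neg_mul (hs : -1 < s) {r : ℝ} (hr : 0 < r) :
    IntegrableOn (fun x : ℝ => x ^ s * Real.exp (-(r * x))) (Ioi 0) := by
  simpa [neg_mul] using integrableOn_rpow_mul_exp_neg_mul_rpow hs one_pos hr

theorem integrableOn_rpow_mul_cexp_neg_mul (hs : -1 < s) {z : ℂ} (hz : 0 < z.re) :
    IntegrableOn (fun x : ℝ => ((x ^ s : ℝ) : ℂ) * Complex.exp (-(z * x))) (Ioi 0) := by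
  refine (integrableOn_rpow_mul_exp_neg_mul hs hz).mono' (by fun_prop) ?_
  filter_upwards [ae_restrict_mem measurableSet_Ioi] with x hx
  rw [norm_rpow_mul_cexp_neg_mul z (le_of_lt hx)]

theorem differentiableOn_integral_rpow_mul_cexp_neg_mul (hs : -1 < s) :
    DifferentiableOn ℂ
      (fun z : ℂ => ∫ x in Ioi (0 : ℝ), ((x ^ s : ℝ) : ℂ) * Complex.exp (-(z * x)))
      {z | 0 < z.re} := by
  intro z₀ hz₀
  have hε : 0 < z₀.re / 2 := half_pos hz₀
  have hderiv := hasDerivAt_integral_of_dominated_loc_of_deriv_le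
    (F := fun z x => ((x ^ s : ℝ) : ℂ) * Complex.exp (-(z * x)))
    (F' := fun z x => -(((x ^ (s + 1) : ℝ) : ℂ) * Complex.exp (-(z * x))))
    (bound := fun x => x ^ (s + 1) * Real.exp (-(z₀.re / 2 * x)))
    ((isOpen_lt continuous_const Complex.continuous_re).mem_nhds
      (show z₀.re / 2 < z₀.re from half_lt_self hz₀))
    (.of_forall fun z => by fun_prop)
    (integrableOn_rpow_mul_cexp_neg_mul hs hz₀)
    (by fun_prop) ?_
    (integrableOn_rpow_mul_exp_neg_mul (by linarith) hε) ?_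
  · exact hderiv.2.differentiableAt.differentiableWithinAt
  · filter_upwards [ae_restrict_mem measurableSet_Ioi]
      with x (hx : 0 < x) z (hz : z₀.re / 2 < z.re)
    rw [norm_neg, norm_rpow_mul_cexp_neg_mul z hx.le]
    gcongr
  · filter_upwards [ae_restrict_mem measurableSet_Ioi] with x (hx : 0 < x) z _
    have h : HasDerivAt (fun w : ℂ => -(w * x)) (-(x : ℂ)) z :=
      (hasDerivAt_mul_const (x : ℂ)).neg
    refine (h.cexp.const_mul ((x ^ s : ℝ) : ℂ)).congr_deriv ?_
    rw [Real.rpow_add_one hx.ne']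
    push_cast
    ring

theorem integral_rpow_mul_cexp_neg_ofReal_mul (hs : -1 < s) {r : ℝ} (hr : 0 < r) :
    ∫ x in Ioi (0 : ℝ), ((x ^ s : ℝ) : ℂ) * Complex.exp (-(r * x))
      = Real.Gamma (s + 1) * (r : ℂ) ^ ((-(s + 1) : ℝ) : ℂ) := by
  have h := Real.integral_rpow_mul_exp_neg_mul_Ioi_eq_Gamma_mul_rpow hs hr
  have hreal (x : ℝ) : ((x ^ s : ℝ) : ℂ) * Complex.exp (-(r * x))
      = ((x ^ s * Real.exp (-(r * x)) : ℝ) : ℂ) := by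
    push_cast
    ring_nf
  simp_rw [hreal, integral_complex_ofReal, h, ← Complex.ofReal_cpow hr.le,
    Complex.ofReal_mul]

theorem integral_rpow_mul_cexp_neg_mul (hs : -1 < s) {z : ℂ} (hz : 0 < z.re) :
    ∫ x in Ioi (0 : ℝ), ((x ^ s : ℝ) : ℂ) * Complex.exp (-(z * x))
      = Real.Gamma (s + 1) * z ^ ((-(s + 1) : ℝ) : ℂ) := by
  have hU : IsOpen {z : ℂ | 0 < z.re} := isOpen_lt continuous_const Complex.continuous_re
  have hrhs : DifferentiableOn ℂ (fun z : ℂ => Real.Gamma (s + 1) * z ^ ((-(s + 1) : ℝ) : ℂ))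
      {z | 0 < z.re} := fun w hw =>
    ((differentiableAt_id.cpow_const (Or.inl hw)).const_mul _).differentiableWithinAt
  have hofReal : Tendsto ((↑) : ℝ → ℂ) (𝓝[≠] 1) (𝓝[≠] 1) :=
    tendsto_nhdsWithin_of_tendsto_nhds_of_eventually_within _
      ((Complex.continuous_ofReal.tendsto' 1 1 Complex.ofReal_one).mono_left nhdsWithin_le_nhds)
      (eventually_nhdsWithin_of_forall fun r (hr : r ≠ 1) => by simpa using hr)
  -- The two sides are holomorphic on the half-plane and agree on the positive reals.
  refine ((differentiableOn_integral_rpow_mul_cexp_neg_mul hs).analyticOnNhd hU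
    ).eqOn_of_preconnected_of_frequently_eq (hrhs.analyticOnNhd hU)
    (convex_halfSpace_re_gt 0).isPreconnected (by simp : (1 : ℂ) ∈ {z : ℂ | 0 < z.re})
    (hofReal.frequently ?_) hz
  exact (eventually_nhdsWithin_of_eventually_nhds (Ioi_mem_nhds one_pos)).frequently.mono
    fun r hr => integral_rpow_mul_cexp_neg_ofReal_mul hs hr

end LaplacePower

theorem hasSum_integral_exp_mul_rpow_mul_cexp_neg_mul (A : ℝ) {α : ℝ} (hα0 : 0 < α)
    (hα1 : α < 1) {z : ℂ} (hz : 0 < z.re) :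
    HasSum (fun k : ℕ =>
        ((A ^ k / k ! * Real.Gamma (α * k + 1) : ℝ) : ℂ) * z ^ ((-(α * k + 1) : ℝ) : ℂ))
      (∫ x in Ioi (0 : ℝ), ((Real.exp (A * x ^ α) : ℝ) : ℂ) * Complex.exp (-z * x)) := by
  set F : ℕ → ℝ → ℂ := fun k x =>
    ((A ^ k / k ! : ℝ) : ℂ) * (((x ^ (α * k) : ℝ) : ℂ) * Complex.exp (-(z * x)))
  have hαk (k : ℕ) : -1 < α * k := by linarith [(by positivity : 0 ≤ α * k)]
  have hint (k : ℕ) : Integrable (F k) (volume.restrict (Ioi 0)) :=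
    (integrableOn_rpow_mul_cexp_neg_mul (hαk k) hz).const_mul _
  have hnorm (k : ℕ) :
      ∫ x in Ioi (0 : ℝ), ‖F k x‖
        = |A| ^ k / k ! * Real.Gamma (α * k + 1) * z.re ^ (-(α * k + 1)) := by
    rw [setIntegral_congr_fun measurableSet_Ioi fun x (hx : 0 < x) => by
      rw [norm_mul, norm_rpow_mul_cexp_neg_mul z hx.le, Complex.norm_real, norm_div, norm_pow,
        Real.norm_natCast, Real.norm_eq_abs], integral_const_mul,
      Real.integral_rpow_mul_exp_neg_mul_Ioi_eq_Gamma_mul_rpow (hαk k) hz, mul_assoc]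
  have hsum := hasSum_integral_of_summable_integral_norm hint (by
    simpa only [hnorm] using Real.summable_pow_div_factorial_mul_Gamma_mul_rpow_neg hα0 hα1 |A| hz)
  have hseries : ∀ x ∈ Ioi (0 : ℝ),
      ∑' k, F k x = ((Real.exp (A * x ^ α) : ℝ) : ℂ) * Complex.exp (-z * x) := by
    intro x (hx : 0 < x)
    have hexp := Complex.hasSum_ofReal.2
      (Real.exp_eq_exp_ℝ ▸ NormedSpace.expSeries_div_hasSum_exp (A * x ^ α))
    rw [neg_mul, ← (hexp.mul_right (Complex.exp (-(z * x)))).tsum_eq]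
    refine tsum_congr fun k => ?_
    simp only [F]
    rw [Real.rpow_mul_natCast hx.le]
    push_cast
    ring
  rw [← setIntegral_congr_fun measurableSet_Ioi hseries]
  have hterm (k : ℕ) : ∫ x in Ioi (0 : ℝ), F k x
      = ((A ^ k / k ! * Real.Gamma (α * k + 1) : ℝ) : ℂ) * z ^ ((-(α * k + 1) : ℝ) : ℂ) := by
    rw [integral_const_mul, integral_rpow_mul_cexp_neg_mul (hαk k) hz]
    push_cast
    ring
  simpa only [hterm] using hsum

theorem hasSum_integral_exp_mul_rpow_sub_mul (A : ℝ) {α : ℝ} (hα0 : 0 < α) (hα1 : α < 1)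
    {t : ℝ} (ht : 0 < t) :
    HasSum (fun k : ℕ => A ^ k / k ! * Real.Gamma (α * k + 1) * t ^ (-(α * k + 1)))
      (∫ x in Ioi (0 : ℝ), Real.exp (A * x ^ α - t * x)) := by
  have h := hasSum_integral_exp_mul_rpow_mul_cexp_neg_mul A hα0 hα1 (z := t) (by simpa using ht)
  have hintegrand (x : ℝ) : ((Real.exp (A * x ^ α) : ℝ) : ℂ) * Complex.exp (-t * x)
      = ((Real.exp (A * x ^ α - t * x) : ℝ) : ℂ) := by
    rw [sub_eq_add_neg, Real.exp_add]
    push_cast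
    ring_nf
  simp_rw [← Complex.ofReal_cpow ht.le, ← Complex.ofReal_mul, hintegrand] at h
  rw [integral_complex_ofReal] at h
  exact Complex.hasSum_ofReal.1 h

theorem norm_integral_exp_mul_rpow_mul_cexp_neg_mul_le (A : ℝ) {α : ℝ} (hα0 : 0 < α)
    (hα1 : α < 1) {δ : ℝ} (hδ : 0 < δ) {z : ℂ} (hz : 0 < z.re) (hzδ : δ ≤ ‖z‖) :
    ‖∫ x in Ioi (0 : ℝ), ((Real.exp (A * x ^ α) : ℝ) : ℂ) * Complex.exp (-z * x)‖
      ≤ ∑' k : ℕ, |A| ^ k / k ! * Real.Gamma (α * k + 1) * δ ^ (-(α * k + 1)) := by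
  refine (hasSum_integral_exp_mul_rpow_mul_cexp_neg_mul A hα0 hα1 hz).norm_le_of_bounded
    (Real.summable_pow_div_factorial_mul_Gamma_mul_rpow_neg hα0 hα1 |A| hδ).hasSum fun k => ?_
  have hΓ := Real.Gamma_pos_of_pos (by positivity : 0 < α * k + 1)
  rw [norm_mul, Complex.norm_real, Complex.norm_cpow_real, Real.norm_eq_abs, abs_mul, abs_div,
    abs_pow, Nat.abs_cast, abs_of_pos hΓ]
  have hexp : -(α * k + 1) ≤ 0 := by linarith [(by positivity : 0 ≤ α * k)]
  exact mul_le_mul_of_nonneg_left (Real.rpow_le_rpow_of_nonpos hδ hzδ hexp) (by positivity)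

theorem stmt17_general (A : ℝ) (α : ℝ) (hα : 0 < α) (hα1 : α < 1) :
    (∀ t : ℝ, 0 < t →
      Summable (fun k : ℕ => (A / t ^ α) ^ k * (Real.Gamma (α * k + 1) / Real.Gamma (k + 1))) ∧
      ∫ x in Set.Ioi (0:ℝ), Real.exp (A * x ^ α - t * x)
        = (1 / t) * ∑' k : ℕ, (A / t ^ α) ^ k * (Real.Gamma (α * k + 1) / Real.Gamma (k + 1))) ∧
    (∀ δ > (0:ℝ), ∃ M : ℝ, ∀ z : ℂ, 0 < z.re → δ ≤ ‖z‖ →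
      ‖∫ x in Set.Ioi (0:ℝ), ((Real.exp (A * x ^ α) : ℝ) : ℂ) * Complex.exp (-z * (x : ℂ))‖ ≤ M) := by
  refine ⟨fun t ht => ?_, fun δ hδ => ⟨_, fun z hz hzδ =>
    norm_integral_exp_mul_rpow_mul_cexp_neg_mul_le A hα hα1 hδ hz hzδ⟩⟩
  have h := (hasSum_integral_exp_mul_rpow_sub_mul A hα hα1 ht).mul_left t
  simp only [Real.pow_div_factorial_mul_Gamma_mul_rpow_neg α A ht,
    mul_inv_cancel_left₀ ht.ne'] at h
  simp only [Real.Gamma_nat_eq_factorial]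
  rw [h.tsum_eq, one_div, inv_mul_cancel_left₀ ht.ne']
  exact ⟨h.summable, rfl⟩

theorem stmt17 (A : ℝ) (hA : 0 < A) (α : ℝ) (hα : 0 < α) (hα1 : α < 1) :
    (∀ t : ℝ, 0 < t →
      Summable (fun k : ℕ => (A / t ^ α) ^ k * (Real.Gamma (α * k + 1) / Real.Gamma (k + 1))) ∧
      ∫ x in Set.Ioi (0:ℝ), Real.exp (A * x ^ α - t * x)
        = (1 / t) * ∑' k : ℕ, (A / t ^ α) ^ k * (Real.Gamma (α * k + 1) / Real.Gamma (k + 1))) ∧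
    (∀ δ > (0:ℝ), ∃ M : ℝ, ∀ z : ℂ, 0 < z.re → δ ≤ ‖z‖ →
      ‖∫ x in Set.Ioi (0:ℝ), ((Real.exp (A * x ^ α) : ℝ) : ℂ) * Complex.exp (-z * (x : ℂ))‖ ≤ M) :=
  stmt17_general A α hα hα1
end
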